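/- arXiv:cs/0402028 — 8 statements merged into one kernel-verified Lean document; each statement's English description precedes it below -/
import Mathlib

section
/- Let G be a finite connected simple graph and let λ : V → ℤ^d be an isometric embedding of G. Then the map μ : V → {0,1}^τ constructed from λ (with τ = Σ_i (β_i − α_i) and coordinates μ_{j(i,γ)}(v) = 0 if λ_i(v) ≤ γ, 1 otherwise) is a full-dimensional hypercube isometry: hammingDist(μ(u), μ(v)) = d_G(u,v) for all u,v ∈ V, and each coordinate μ_j takes both values 0 and 1 on V. -/
/-- The hypercube coordinate map constructed from a lattice embedding `lam` with
coordinate-wise minima `α` and maxima `β`: the coordinate indexed by the pair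
`(i, k)` (corresponding to the integer `γ = α i + k` with `α i ≤ γ < β i`)
takes the value `false` (i.e. 0) on `v` when `lam v i ≤ γ` and `true` (i.e. 1)
otherwise. -/
def latticeToCubeMap {V : Type*} {d : ℕ} (lam : V → Fin d → ℤ) (α β : Fin d → ℤ)
    (v : V) (j : Σ i : Fin d, Fin (β i - α i).toNat) : Bool :=
  decide (α j.1 + (j.2.1 : ℤ) < lam v j.1)

lemma cube_count_lemma (α : ℤ) (n : ℕ) (a b : ℤ) (ha : α ≤ a) (ha' : a ≤ α + n)
    (hb : α ≤ b) (hb' : b ≤ α + n) :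
    ((Finset.univ.filter fun k : Fin n => decide (α + (k:ℤ) < a) ≠ decide (α + (k:ℤ) < b)).card : ℤ)
      = |a - b| := by
  wlog hab : b ≤ a with H
  · rw [abs_sub_comm]
    rw [← H α n b a hb hb' ha ha' (by omega)]
    congr 2
    ext k
    simp only [Finset.mem_filter, Finset.mem_univ, true_and, ne_eq, decide_eq_decide]
    tauto
  rw [abs_of_nonneg (by omega)]
  have h : (Finset.univ.filter fun k : Fin n => decide (α + (k:ℤ) < a) ≠ decide (α + (k:ℤ) < b)).card
      = (Finset.Ico b a).card := by
    apply Finset.card_bij (fun (k : Fin n) _ => α + (k:ℤ))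
    · intro k hk
      simp only [Finset.mem_filter, Finset.mem_univ, true_and, ne_eq, decide_eq_decide] at hk
      simp only [Finset.mem_Ico]; omega
    · intro k _ k' _ hkk
      ext; omega
    · intro γ hγ
      simp only [Finset.mem_Ico] at hγ
      refine ⟨⟨(γ - α).toNat, by omega⟩, ?_, by push_cast; omega⟩
      simp only [Finset.mem_filter, Finset.mem_univ, true_and, ne_eq, decide_eq_decide]
      push_cast
      omega
  rw [h, Int.card_Ico]
  omega



/-- **Lemma 1.** If `lam : V → ℤ^d` is an isometric embedding of a finite connected
graph `G`, then the map `μ = latticeToCubeMap lam α β : V → {0,1}^τ`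
(with `τ = Σ_i (β_i − α_i)`) is a full-dimensional hypercube isometry:
Hamming distances equal graph distances, and each coordinate takes both values. -/
theorem lattice_embedding_gives_full_dimensional_cube_isometry
    {V : Type*} [Fintype V] [DecidableEq V]
    (G : SimpleGraph V) (hconn : G.Connected)
    (d : ℕ) (lam : V → Fin d → ℤ)
    (hiso : ∀ u v : V, ∑ i, |lam u i - lam v i| = (G.dist u v : ℤ))
    (α β : Fin d → ℤ)
    (hα : ∀ i, IsLeast (Set.range fun v => lam v i) (α i))
    (hβ : ∀ i, IsGreatest (Set.range fun v => lam v i) (β i)) :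
    (∀ u v : V,
      hammingDist (latticeToCubeMap lam α β u) (latticeToCubeMap lam α β v)
        = G.dist u v) ∧
    (∀ j : Σ i : Fin d, Fin (β i - α i).toNat,
      (∃ v : V, latticeToCubeMap lam α β v j = false) ∧
      (∃ v : V, latticeToCubeMap lam α β v j = true)) := by
  have hal : ∀ i (v : V), α i ≤ lam v i := fun i v => (hα i).2 ⟨v, rfl⟩
  have hbl : ∀ i (v : V), lam v i ≤ β i := fun i v => (hβ i).2 ⟨v, rfl⟩
  constructor
  · intro u v
    have key : (hammingDist (latticeToCubeMap lam α β u) (latticeToCubeMap lam α β v) : ℤ)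
        = ∑ i, |lam u i - lam v i| := by
      unfold hammingDist
      rw [← Finset.univ_sigma_univ, Finset.card_filter]
      push_cast
      rw [Finset.sum_sigma]
      refine Finset.sum_congr rfl fun i _ => ?_
      rw [Finset.sum_boole]
      have hn : (((β i - α i).toNat : ℤ)) = β i - α i :=
        Int.toNat_of_nonneg (by have := hal i u; have := hbl i u; omega)
      rw [← cube_count_lemma (α i) ((β i - α i).toNat) (lam u i) (lam v i) (hal i u)
        (by have := hbl i u; omega) (hal i v) (by have := hbl i v; omega)]
      norm_cast
    have := hiso u v
    omega
  · intro ⟨i, k⟩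
    obtain ⟨va, hva⟩ := (hα i).1
    obtain ⟨vb, hvb⟩ := (hβ i).1
    have hva' : lam va i = α i := hva
    have hvb' : lam vb i = β i := hvb
    have hk : (k : ℤ) < β i - α i := by
      have h2 := k.2
      have := hal i vb
      omega
    constructor
    · refine ⟨va, ?_⟩
      simp only [latticeToCubeMap, decide_eq_false_iff_not, not_lt]
      have := k.2.le
      omega
    · refine ⟨vb, ?_⟩
      simp only [latticeToCubeMap, decide_eq_true_eq]
      omega
end

section
/- Let G be a finite connected simple graph with an isometric embedding λ : V → ℤ^d in which every lattice coordinate attains at least two values (β_i > α_i for each i), and let μ : V → {0,1}^τ with τ = Σ_i (β_i − α_i) be the full-dimensional hypercube isometry constructed from λ. Then the semicube graph Sc(G) (taken with respect to μ) contains a matching M with |M| = τ − d. -/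
/-- The semicube `S_{i,χ} = {v | μ_i(v) = χ}` of a hypercube embedding `μ`. -/
def semicube {V ι : Type*} (μ : V → ι → Bool) (i : ι) (χ : Bool) : Set V :=
  {v | μ v i = χ}

/-- The semicube graph `Sc(G)`: vertices are the pairs `(i,χ)` (representing the
semicubes `S_{i,χ}`), with an edge between two distinct pairs exactly when the
corresponding semicubes cover all vertices and intersect nontrivially. -/
def semicubeGraph {V ι : Type*} (μ : V → ι → Bool) : SimpleGraph (ι × Bool) where
  Adj p q := p ≠ q ∧
    semicube μ p.1 p.2 ∪ semicube μ q.1 q.2 = Set.univ ∧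
    (semicube μ p.1 p.2 ∩ semicube μ q.1 q.2).Nonempty
  symm := by
    constructor
    rintro p q ⟨h1, h2, h3⟩
    exact ⟨h1.symm, by rwa [Set.union_comm], by rwa [Set.inter_comm]⟩
  loopless := by constructor; rintro p ⟨h1, -⟩; exact h1 rfl

/-- `M` is a matching in the graph `H`: a finite set of edges of `H`,
no two of which share an endpoint. -/
def IsMatchingIn {α : Type*} (H : SimpleGraph α) (M : Finset (Sym2 α)) : Prop :=
  (∀ e ∈ M, e ∈ H.edgeSet) ∧
    ∀ e ∈ M, ∀ f ∈ M, e ≠ f → ∀ a, a ∈ e → a ∉ f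

/-! Every lattice coordinate of an isometric embedding changes by at most one along an edge, so
by connectivity it takes every integer value between its minimum `α i` and maximum `β i`. Hence
for each threshold `γ` with `α i < γ + 1 < β i` the semicubes `{λ_i > γ}` and `{λ_i ≤ γ + 1}`
cover `V` and meet in the nonempty level set `{λ_i = γ + 1}`, so they are adjacent in `Sc(G)`.
Pairing each `(i, γ)` with `(i, γ + 1)` this way uses the upper semicubes of distinct
coordinates and the lower semicubes of distinct coordinates, so it is a matching, with
`β_i - α_i - 1` edges for each `i`. -/

lemma abs_sub_le_one_of_adj {V : Type*} {G : SimpleGraph V} {d : ℕ} {lam : V → Fin d → ℤ}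
    (hiso : ∀ u v : V, ∑ i, |lam u i - lam v i| = (G.dist u v : ℤ))
    {u v : V} (huv : G.Adj u v) (i : Fin d) : |lam u i - lam v i| ≤ 1 :=
  calc |lam u i - lam v i| ≤ ∑ j, |lam u j - lam v j| :=
        Finset.single_le_sum (f := fun j => |lam u j - lam v j|) (fun _ _ => abs_nonneg _)
          (Finset.mem_univ i)
    _ = 1 := by rw [hiso, SimpleGraph.dist_eq_one_iff_adj.mpr huv, Nat.cast_one]

namespace SimpleGraph

variable {V : Type*} {G : SimpleGraph V} {f : V → ℤ}

lemma Walk.exists_apply_eq (hf : ∀ u v, G.Adj u v → |f u - f v| ≤ 1) {a b : V}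
    (p : G.Walk a b) {γ : ℤ} (ha : f a ≤ γ) (hb : γ ≤ f b) : ∃ v, f v = γ := by
  induction p with
  | nil => exact ⟨_, le_antisymm ha hb⟩
  | @cons a x b hax q ih =>
    rcases ha.eq_or_lt with heq | hlt
    · exact ⟨a, heq⟩
    · have hstep := abs_le.mp (hf a x hax)
      exact ih (by omega) hb

lemma Preconnected.exists_apply_eq (hG : G.Preconnected)
    (hf : ∀ u v, G.Adj u v → |f u - f v| ≤ 1) {a b : V} {γ : ℤ} (ha : f a ≤ γ)
    (hb : γ ≤ f b) : ∃ v, f v = γ :=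
  let ⟨p⟩ := hG a b
  p.exists_apply_eq hf ha hb

end SimpleGraph

section PairMatching

variable {ι κ : Type*} [DecidableEq ι] [Fintype κ]

def pairMatching (a b : κ → ι) : Finset (Sym2 (ι × Bool)) :=
  Finset.univ.image fun k => s((a k, true), (b k, false))

lemma isMatchingIn_pairMatching (H : SimpleGraph (ι × Bool)) {a b : κ → ι}
    (ha : a.Injective) (hb : b.Injective) (hadj : ∀ k, H.Adj (a k, true) (b k, false)) :
    IsMatchingIn H (pairMatching a b) := by
  refine ⟨?_, ?_⟩
  · simp only [pairMatching, Finset.mem_image, Finset.mem_univ, true_and]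
    rintro _ ⟨k, rfl⟩
    exact hadj k
  · simp only [pairMatching, Finset.mem_image, Finset.mem_univ, true_and]
    rintro _ ⟨k, rfl⟩ _ ⟨l, rfl⟩ hkl x hxk hxl
    simp only [Sym2.mem_iff] at hxk hxl
    rcases hxk with rfl | rfl <;> rcases hxl with h | h <;>
      simp only [Prod.mk.injEq, Bool.true_eq_false, Bool.false_eq_true, and_false,
        and_true, ha.eq_iff, hb.eq_iff] at h <;>
      exact hkl (by rw [h])

lemma card_pairMatching {a : κ → ι} (ha : a.Injective) (b : κ → ι) :
    (pairMatching a b).card = Fintype.card κ := by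
  refine Finset.card_image_of_injective _ fun k l h => ha ?_
  simp only [Sym2.eq_iff, Prod.mk.injEq, Bool.true_eq_false, and_false, false_and,
    or_false] at h
  exact h.1.1

end PairMatching

lemma semicubeGraph_latticeToCubeMap_adj {V : Type*} {d : ℕ} {lam : V → Fin d → ℤ}
    {α β : Fin d → ℤ} {i : Fin d} {k k' : Fin (β i - α i).toNat} (hk : (k' : ℕ) = k + 1)
    {v : V} (hv : lam v i = α i + k') :
    (semicubeGraph (latticeToCubeMap lam α β)).Adj (⟨i, k⟩, true) (⟨i, k'⟩, false) := by
  refine ⟨by simp, ?_, v, ?_⟩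
  · ext u
    simp only [semicube, latticeToCubeMap, Set.mem_union, Set.mem_ofPred_eq,
      decide_eq_true_eq, decide_eq_false_iff_not, Set.mem_univ, iff_true]
    omega
  · simp only [semicube, latticeToCubeMap, Set.mem_inter_iff, Set.mem_ofPred_eq,
      decide_eq_true_eq, decide_eq_false_iff_not]
    omega

theorem matching_from_lattice_embedding_general
    {V : Type*}
    (G : SimpleGraph V) (hconn : G.Connected)
    (d : ℕ) (lam : V → Fin d → ℤ)
    (hiso : ∀ u v : V, ∑ i, |lam u i - lam v i| = (G.dist u v : ℤ))
    (α β : Fin d → ℤ)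
    (hα : ∀ i, IsLeast (Set.range fun v => lam v i) (α i))
    (hβ : ∀ i, IsGreatest (Set.range fun v => lam v i) (β i))
    (hfull : ∀ i, α i < β i) :
    ∃ M : Finset (Sym2 ((Σ i : Fin d, Fin (β i - α i).toNat) × Bool)),
      IsMatchingIn (semicubeGraph (latticeToCubeMap lam α β)) M ∧
      d ≤ ∑ i, (β i - α i).toNat ∧
      M.card = (∑ i, (β i - α i).toNat) - d := by
  have hlevel : ∀ i γ, α i ≤ γ → γ ≤ β i → ∃ v, lam v i = γ := fun i γ h₁ h₂ => by
    obtain ⟨⟨u, hu⟩, -⟩ := hα i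
    obtain ⟨⟨w, hw⟩, -⟩ := hβ i
    exact hconn.preconnected.exists_apply_eq (f := fun v => lam v i)
      (fun _ _ h => abs_sub_le_one_of_adj hiso h i) (hu ▸ h₁) (hw ▸ h₂)
  have hpos : ∀ i, 1 ≤ (β i - α i).toNat := fun i => by have := hfull i; omega
  -- `(i, k)` for `k < β i - α i - 1` indexes the pair of thresholds `α i + k`, `α i + k + 1`
  let a : (Σ i : Fin d, Fin ((β i - α i).toNat - 1)) → Σ i : Fin d, Fin (β i - α i).toNat :=
    Sigma.map id fun _ k => Fin.castLE (Nat.sub_le _ 1) k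
  let b : (Σ i : Fin d, Fin ((β i - α i).toNat - 1)) → Σ i : Fin d, Fin (β i - α i).toNat :=
    Sigma.map id fun _ k => ⟨k + 1, Nat.add_lt_of_lt_sub k.2⟩
  have ha : a.Injective := Function.injective_id.sigma_map fun _ => Fin.castLE_injective _
  have hb : b.Injective := Function.injective_id.sigma_map fun _ _ _ h =>
    Fin.ext (Nat.succ_injective (congrArg Fin.val h))
  refine ⟨pairMatching a b, isMatchingIn_pairMatching _ ha hb fun ⟨i, k⟩ => ?_,
    le_of_eq_of_le (by simp) (Finset.sum_le_sum fun i _ => hpos i), ?_⟩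
  · obtain ⟨v, hv⟩ := hlevel i (α i + (k + 1 : ℕ)) (by omega) (by omega)
    exact semicubeGraph_latticeToCubeMap_adj rfl hv
  · simp only [card_pairMatching ha, Fintype.card_sigma, Fintype.card_fin,
      Finset.sum_tsub_distrib _ fun i _ => hpos i]
    simp

/-- **Lemma 3.** If `lam : V → ℤ^d` is an isometric embedding of a finite connected
graph `G` in which every coordinate attains at least two values, and
`μ = latticeToCubeMap lam α β : V → {0,1}^τ` with `τ = Σ_i (β_i − α_i)` is the
hypercube isometry constructed from it, then the semicube graph `Sc(G)` (taken
with respect to `μ`) contains a matching `M` with `|M| = τ − d`. -/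
theorem matching_from_lattice_embedding
    {V : Type*} [Fintype V] [DecidableEq V]
    (G : SimpleGraph V) (hconn : G.Connected)
    (d : ℕ) (lam : V → Fin d → ℤ)
    (hiso : ∀ u v : V, ∑ i, |lam u i - lam v i| = (G.dist u v : ℤ))
    (α β : Fin d → ℤ)
    (hα : ∀ i, IsLeast (Set.range fun v => lam v i) (α i))
    (hβ : ∀ i, IsGreatest (Set.range fun v => lam v i) (β i))
    (hfull : ∀ i, α i < β i) :
    ∃ M : Finset (Sym2 ((Σ i : Fin d, Fin (β i - α i).toNat) × Bool)),
      IsMatchingIn (semicubeGraph (latticeToCubeMap lam α β)) M ∧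
      d ≤ ∑ i, (β i - α i).toNat ∧
      M.card = (∑ i, (β i - α i).toNat) - d :=
  matching_from_lattice_embedding_general G hconn d lam hiso α β hα hβ hfull
end

section
/- Let G be a finite connected simple graph with a full-dimensional hypercube isometry μ : V → {0,1}^τ, let M be a matching in the semicube graph Sc(G), and let P be the graph on the 2τ semicube-vertices whose edge set is M together with an edge between each pair of complementary semicubes (i,0)–(i,1). Then P contains no cycle. -/
/-- The graph `P` on the semicube-vertices `(i,χ)` whose edges are the edges of a
matching `M` together with an edge between each pair of complementary semicubes
`(i,0)–(i,1)` (i.e. two distinct vertices with the same first coordinate). -/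
def augmentedPathGraph {ι : Type*} (M : Finset (Sym2 (ι × Bool))) :
    SimpleGraph (ι × Bool) where
  Adj p q := p ≠ q ∧ (s(p, q) ∈ M ∨ p.1 = q.1)
  symm := by
    constructor
    rintro p q ⟨h1, h2⟩
    refine ⟨h1.symm, ?_⟩
    rcases h2 with h | h
    · left; rwa [Sym2.eq_swap]
    · right; exact h.symm
  loopless := by constructor; rintro p ⟨h1, -⟩; exact h1 rfl

/-!
In `P` every vertex has exactly one complement edge and at most one matching edge, so a cycle
of `P` passes through each of its vertices along one edge of each kind. Weight a vertex `(i, χ)`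
by `|S_{i,χ}|`: complementary semicubes have weights summing to `|V|`, while two semicubes
adjacent in `Sc(G)` cover `V` and meet, so their weights sum to more than `|V|`. Starting from a
vertex `u` of maximal weight on a cycle, the complement edge leads to `ū` and the matching edge at
`ū` to some `w` with `|S_w| > |V| - |S_ū| = |S_u|`, a contradiction.
-/

section Semicube

variable {V ι : Type*} (μ : V → ι → Bool)

lemma semicube_not (i : ι) (χ : Bool) : semicube μ i (!χ) = (semicube μ i χ)ᶜ := by
  ext v
  cases χ <;> simp [semicube]

lemma ncard_semicube_add_ncard_semicube_not [Finite V] (i : ι) (χ : Bool) :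
    (semicube μ i χ).ncard + (semicube μ i (!χ)).ncard = Nat.card V := by
  rw [semicube_not]
  exact Set.ncard_add_ncard_compl _

lemma card_lt_ncard_semicube_add_ncard_semicube_of_adj [Finite V] {p q : ι × Bool}
    (h : (semicubeGraph μ).Adj p q) :
    Nat.card V < (semicube μ p.1 p.2).ncard + (semicube μ q.1 q.2).ncard := by
  obtain ⟨-, hcover, hmeet⟩ := h
  have hunion := Set.ncard_union_add_ncard_inter (semicube μ p.1 p.2) (semicube μ q.1 q.2)
  rw [hcover, Set.ncard_univ] at hunion
  have := hmeet.ncard_pos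
  omega

end Semicube

lemma IsMatchingIn.eq_of_mem_of_mem {α : Type*} {H : SimpleGraph α} {M : Finset (Sym2 α)}
    (hM : IsMatchingIn H M) {x a b : α} (ha : s(x, a) ∈ M) (hb : s(x, b) ∈ M) : a = b := by
  by_contra hab
  exact hM.2 _ ha _ hb (fun h => hab (Sym2.congr_right.mp h)) x (by simp) (by simp)

lemma SimpleGraph.Walk.IsCycle.exists_ne_toSubgraph_adj {α : Type*} {G : SimpleGraph α}
    {u x : α} {c : G.Walk u u} (hc : c.IsCycle) (hx : x ∈ c.support) :
    ∃ a b, a ≠ b ∧ c.toSubgraph.Adj x a ∧ c.toSubgraph.Adj x b := by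
  obtain ⟨a, b, hab, hnbhd⟩ := Set.ncard_eq_two.mp (hc.ncard_neighborSet_toSubgraph_eq_two hx)
  have ha : a ∈ c.toSubgraph.neighborSet x := by simp [hnbhd]
  have hb : b ∈ c.toSubgraph.neighborSet x := by simp [hnbhd]
  exact ⟨a, b, hab, ha, hb⟩

section AugmentedPathGraph

variable {ι : Type*} {M : Finset (Sym2 (ι × Bool))}

lemma eq_complement_of_augmentedPathGraph_adj_of_notMem {x y : ι × Bool}
    (h : (augmentedPathGraph M).Adj x y) (hy : s(x, y) ∉ M) : y = (x.1, !x.2) := by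
  obtain ⟨hne, hM | hfst⟩ := h
  · exact absurd hM hy
  obtain ⟨x₁, x₂⟩ := x
  obtain ⟨y₁, y₂⟩ := y
  simp only at hfst
  subst hfst
  cases x₂ <;> cases y₂ <;> simp_all

lemma complement_mem_support_and_exists_matched_of_isCycle {H : SimpleGraph (ι × Bool)}
    (hM : IsMatchingIn H M) {u x : ι × Bool} {c : (augmentedPathGraph M).Walk u u}
    (hc : c.IsCycle) (hx : x ∈ c.support) :
    (x.1, !x.2) ∈ c.support ∧ ∃ w ∈ c.support, s(x, w) ∈ M := by
  obtain ⟨a, b, hab, ha, hb⟩ := hc.exists_ne_toSubgraph_adj hx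
  have mem {y} (hy : c.toSubgraph.Adj x y) : y ∈ c.support :=
    c.mem_verts_toSubgraph.mp hy.snd_mem
  have complement {y} (hy : c.toSubgraph.Adj x y) (hyM : s(x, y) ∉ M) : y = (x.1, !x.2) :=
    eq_complement_of_augmentedPathGraph_adj_of_notMem hy.adj_sub hyM
  by_cases haM : s(x, a) ∈ M
  · have hbM : s(x, b) ∉ M := fun hbM => hab (hM.eq_of_mem_of_mem haM hbM)
    exact ⟨complement hb hbM ▸ mem hb, a, mem ha, haM⟩
  · refine ⟨complement ha haM ▸ mem ha, b, mem hb, ?_⟩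
    by_contra hbM
    exact hab ((complement ha haM).trans (complement hb hbM).symm)

end AugmentedPathGraph

theorem augmented_matching_graph_acyclic_general
    {V : Type*} [Fintype V]
    (τ : ℕ) (μ : V → Fin τ → Bool)
    (M : Finset (Sym2 (Fin τ × Bool)))
    (hM : IsMatchingIn (semicubeGraph μ) M) :
    (augmentedPathGraph M).IsAcyclic := by
  intro v c hc
  let weight : Fin τ × Bool → ℕ := fun p => (semicube μ p.1 p.2).ncard
  obtain ⟨u, hu, hmax⟩ :=
    c.support.toFinset.exists_max_image weight ⟨v, List.mem_toFinset.mpr c.start_mem_support⟩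
  rw [List.mem_toFinset] at hu
  obtain ⟨hū, -⟩ := complement_mem_support_and_exists_matched_of_isCycle hM hc hu
  obtain ⟨-, w, hw, hūw⟩ := complement_mem_support_and_exists_matched_of_isCycle hM hc hū
  have hcompl := ncard_semicube_add_ncard_semicube_not μ u.1 u.2
  have hmatched := card_lt_ncard_semicube_add_ncard_semicube_of_adj μ (hM.1 _ hūw)
  have hw_le : weight w ≤ weight u := hmax w (List.mem_toFinset.mpr hw)
  dsimp only [weight] at hw_le hmatched
  omega

/-- If `μ : V → {0,1}^τ` is a full-dimensional hypercube isometry of the finite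
connected graph `G`, `M` is a matching in `Sc(G)`, and `P` is the graph formed by
`M` together with the complement edges `(i,0)–(i,1)`, then `P` contains no cycle. -/
theorem augmented_matching_graph_acyclic
    {V : Type*} [Fintype V] [DecidableEq V]
    (G : SimpleGraph V) (hconn : G.Connected)
    (τ : ℕ) (μ : V → Fin τ → Bool)
    (hiso : ∀ u v : V, hammingDist (μ u) (μ v) = G.dist u v)
    (hfull : ∀ i : Fin τ, (∃ v, μ v i = false) ∧ (∃ v, μ v i = true))
    (M : Finset (Sym2 (Fin τ × Bool)))
    (hM : IsMatchingIn (semicubeGraph μ) M) :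
    (augmentedPathGraph M).IsAcyclic :=
  augmented_matching_graph_acyclic_general τ μ M hM
end

section
/- Let V be a finite nonempty set, let ℓ be an odd positive integer, and let S_0, S_1, …, S_ℓ be subsets of V such that S_{2j+1} = V ∖ S_{2j} for every j with 2j+1 ≤ ℓ, and S_{2j−2} ⊊ S_{2j} for every j with 2 ≤ 2j ≤ ℓ−1; additionally set S_{−1} = S_{ℓ+1} = V. Then for every element v ∈ V there is a unique integer x with 0 ≤ x ≤ ⌈ℓ/2⌉ such that v ∈ S_{2x−1} ∩ S_{2x}. -/
/-- **Lemma 5 (abstract form).** Let `V` be a finite nonempty set, `ℓ` an odd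
positive integer, and `S : ℤ → Set V` a family of subsets of `V` such that
`S (-1) = S (ℓ+1) = V`, `S (2j+1)` is the complement of `S (2j)` for every `j`
with `2j+1 ≤ ℓ`, and `S (2j-2) ⊊ S (2j)` for every `j` with `2 ≤ 2j ≤ ℓ−1`.
Then for every `v ∈ V` there is a unique `x` with `0 ≤ x ≤ ⌈ℓ/2⌉ = (ℓ+1)/2`
such that `v ∈ S (2x−1) ∩ S (2x)`. -/
theorem unique_coordinate_along_path
    {V : Type*} [Fintype V] [Nonempty V]
    (ℓ : ℕ) (hodd : Odd ℓ) (hpos : 0 < ℓ)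
    (S : ℤ → Set V)
    (htop₁ : S (-1) = Set.univ)
    (htop₂ : S ((ℓ : ℤ) + 1) = Set.univ)
    (hcomp : ∀ j : ℕ, 2 * j + 1 ≤ ℓ → S (2 * (j : ℤ) + 1) = (S (2 * (j : ℤ)))ᶜ)
    (hchain : ∀ j : ℕ, 2 ≤ 2 * j → 2 * j ≤ ℓ - 1 →
      S (2 * (j : ℤ) - 2) ⊂ S (2 * (j : ℤ))) :
    ∀ v : V, ∃! x : ℕ, x ≤ (ℓ + 1) / 2 ∧
      v ∈ S (2 * (x : ℤ) - 1) ∩ S (2 * (x : ℤ)) := by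
  classical
  obtain ⟨k, hk⟩ := hodd
  subst hk
  have hdiv : (2 * k + 1 + 1) / 2 = k + 1 := by omega
  -- complements, restated
  have hcomp' : ∀ j : ℕ, j ≤ k → S (2 * (j : ℤ) + 1) = (S (2 * (j : ℤ)))ᶜ := by
    intro j hj; exact hcomp j (by omega)
  -- one chain step
  have hstep : ∀ n : ℕ, n + 1 ≤ k → S (2 * (n : ℤ)) ⊆ S (2 * (n : ℤ) + 2) := by
    intro n hn
    have h := (hchain (n + 1) (by omega) (by omega)).subset
    have e1 : 2 * (((n + 1 : ℕ) : ℤ)) - 2 = 2 * (n : ℤ) := by push_cast; ring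
    have e2 : 2 * (((n + 1 : ℕ) : ℤ)) = 2 * (n : ℤ) + 2 := by push_cast; ring
    rwa [e1, e2] at h
  -- monotonicity
  have hmono : ∀ a b : ℕ, a ≤ b → b ≤ k → S (2 * (a : ℤ)) ⊆ S (2 * (b : ℤ)) := by
    intro a b hab hbk
    induction b with
    | zero =>
      have : a = 0 := by omega
      subst this; rfl
    | succ n ih =>
      rcases Nat.eq_or_lt_of_le hab with h | h
      · subst h; rfl
      · have h1 : S (2 * (a : ℤ)) ⊆ S (2 * (n : ℤ)) := ih (by omega) (by omega)
        have h2 := hstep n (by omega)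
        have e : 2 * (((n + 1 : ℕ) : ℤ)) = 2 * (n : ℤ) + 2 := by push_cast; ring
        rw [e]
        exact h1.trans h2
  intro v
  set p : ℕ → Prop := fun x => k + 1 ≤ x ∨ v ∈ S (2 * (x : ℤ)) with hp
  have hex : ∃ x, p x := ⟨k + 1, Or.inl le_rfl⟩
  set x₀ := Nat.find hex with hx₀
  have hx₀le : x₀ ≤ k + 1 := Nat.find_le (Or.inl le_rfl)
  -- membership in S (2 x₀)
  have hmem₂ : v ∈ S (2 * (x₀ : ℤ)) := by
    rcases Nat.find_spec hex with h | h
    · have hx : x₀ = k + 1 := by omega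
      have e : 2 * ((x₀ : ℕ) : ℤ) = ((2 * k + 1 : ℕ) : ℤ) + 1 := by
        rw [hx]; push_cast; ring
      rw [e, htop₂]; trivial
    · exact h
  -- membership in S (2 x₀ - 1)
  have hmem₁ : v ∈ S (2 * (x₀ : ℤ) - 1) := by
    rcases Nat.eq_zero_or_pos x₀ with h0 | h0
    · have e : 2 * ((x₀ : ℕ) : ℤ) - 1 = -1 := by omega
      rw [e, htop₁]; trivial
    · obtain ⟨n, hn1⟩ : ∃ n, x₀ = n + 1 := ⟨x₀ - 1, by omega⟩
      have hn : ¬ p n := Nat.find_min hex (by omega)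
      have hnk : n ≤ k := by omega
      have hnot : v ∉ S (2 * (n : ℤ)) := by
        intro hv; exact hn (Or.inr hv)
      have e : 2 * ((x₀ : ℕ) : ℤ) - 1 = 2 * (n : ℤ) + 1 := by omega
      rw [e, hcomp' n hnk]
      exact hnot
  refine ⟨x₀, ⟨by omega, hmem₁, hmem₂⟩, ?_⟩
  rintro y ⟨hy, hy1, hy2⟩
  rw [hdiv] at hy
  by_contra hne
  rcases Nat.lt_or_ge y x₀ with hlt | hge
  · -- y < x₀ : then v ∉ S (2 y), contradiction with hy2
    have hn : ¬ p y := Nat.find_min hex hlt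
    exact hn (Or.inr hy2)
  · have hlt : x₀ < y := by omega
    -- v ∈ S (2 (y-1)) by monotonicity, but v ∈ S (2y - 1) = complement
    obtain ⟨n, rfl⟩ : ∃ n, y = n + 1 := ⟨y - 1, by omega⟩
    have hnk : n ≤ k := by omega
    have e : 2 * (((n + 1 : ℕ) : ℤ)) - 1 = 2 * (n : ℤ) + 1 := by omega
    rw [e, hcomp' n hnk] at hy1
    have hx₀k : x₀ ≤ n := by omega
    exact hy1 (hmono x₀ n hx₀k hnk hmem₂)
end

section
/- Let G be a finite connected simple graph with a full-dimensional hypercube isometry μ : V → {0,1}^τ, and let M be any matching in the semicube graph Sc(G). Then there exists an isometric embedding λ : V → ℤ^d of G into the integer lattice with d = τ − |M|. -/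
/-!
Each matching edge `{x, y}` of `Sc(G)` satisfies `S_x ∪ S_y = V`, i.e. the complement of `S_x` lies
inside `S_y`. Gluing coordinates along such nestings, the `τ` semicube indicators merge into
`τ - |M|` "chain" coordinates `v ↦ #{j | v ∈ T_j}` for nested families `T_1 ⊇ ⋯ ⊇ T_k` of
semicubes. Indicators of nested sets move in the same direction between any two vertices, so the
`ℓ¹`-distance of the chain coordinates is still the Hamming distance, which equals `d_G`.
A matching edge never joins the two ends of the same chain, because these ends are disjoint
while `S_x ∩ S_y ≠ ∅`; hence every edge of `M` really removes one coordinate.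
-/

lemma IsMatchingIn.subset {α : Type*} {H : SimpleGraph α} {M N : Finset (Sym2 α)}
    (hM : IsMatchingIn H M) (hNM : N ⊆ M) : IsMatchingIn H N :=
  ⟨fun e he => hM.1 e (hNM he), fun e he f hf => hM.2 e (hNM he) f (hNM hf)⟩

lemma Multiset.exists_fin_map_eq {β : Type*} (L : Multiset β) {n : ℕ}
    (hn : Multiset.card L = n) : ∃ e : Fin n → β, Finset.univ.val.map e = L := by
  obtain ⟨l, rfl⟩ : ∃ l : List β, (l : Multiset β) = L := ⟨L.toList, L.coe_toList⟩
  rw [Multiset.coe_card] at hn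
  subst hn
  exact ⟨l.get, by rw [Fin.univ_val_map, List.ofFn_get]⟩

/-- Abstracts the coordinate `v ↦ #{j | v ∈ T j}` of a nested chain `T 1 ⊇ ⋯ ⊇ T k` of sets:
besides `height = k`, only the extreme sets are remembered, `top` indexing the innermost set `T k`
and `bot` the complement of the outermost set `T 1`. -/
structure ChainCoord (α V : Type*) where
  f : V → ℤ
  height : ℤ
  top : α
  bot : α

namespace ChainCoord

variable {α V : Type*} {S : α → Set V} {c d : ChainCoord α V}

structure IsAdapted (S : α → Set V) (c : ChainCoord α V) : Prop where
  height_pos : 0 < c.height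
  nonneg : ∀ v, 0 ≤ c.f v
  le_height : ∀ v, c.f v ≤ c.height
  eq_height : ∀ v ∈ S c.top, c.f v = c.height
  eq_zero : ∀ v ∈ S c.bot, c.f v = 0

def ends (c : ChainCoord α V) : Set α := {c.top, c.bot}

lemma IsAdapted.disjoint_of_mem_ends (hc : IsAdapted S c) {x y : α} (hx : x ∈ c.ends)
    (hy : y ∈ c.ends) (hxy : x ≠ y) : Disjoint (S x) (S y) := by
  have key : Disjoint (S c.top) (S c.bot) := Set.disjoint_left.2 fun v htop hbot => by
    have := hc.height_pos
    linarith [hc.eq_height v htop, hc.eq_zero v hbot]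
  simp only [ends, Set.mem_insert_iff, Set.mem_singleton_iff] at hx hy
  rcases hx with rfl | rfl <;> rcases hy with rfl | rfl
  exacts [absurd rfl hxy, key, key.symm, absurd rfl hxy]

def reverse (c : ChainCoord α V) : ChainCoord α V :=
  ⟨fun v => c.height - c.f v, c.height, c.bot, c.top⟩

lemma IsAdapted.reverse (hc : IsAdapted S c) : IsAdapted S c.reverse where
  height_pos := hc.height_pos
  nonneg v := sub_nonneg.2 (hc.le_height v)
  le_height v := sub_le_self _ (hc.nonneg v)
  eq_height v hv := by simp [ChainCoord.reverse, hc.eq_zero v hv]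
  eq_zero v hv := by simp [ChainCoord.reverse, hc.eq_height v hv]

lemma ends_reverse (c : ChainCoord α V) : c.reverse.ends = c.ends := Set.pair_comm _ _

lemma abs_sub_reverse (c : ChainCoord α V) (u v : V) :
    |c.reverse.f u - c.reverse.f v| = |c.f u - c.f v| := by
  simp only [ChainCoord.reverse, sub_sub_sub_cancel_left, abs_sub_comm]

lemma IsAdapted.exists_top_eq (hc : IsAdapted S c) {x : α} (hx : x ∈ c.ends) :
    ∃ c' : ChainCoord α V, IsAdapted S c' ∧ c'.top = x ∧ c'.ends = c.ends ∧
      ∀ u v, |c'.f u - c'.f v| = |c.f u - c.f v| := by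
  rcases hx with rfl | rfl
  · exact ⟨c, hc, rfl, rfl, fun _ _ => rfl⟩
  · exact ⟨c.reverse, hc.reverse, rfl, c.ends_reverse, c.abs_sub_reverse⟩

lemma IsAdapted.exists_bot_eq (hc : IsAdapted S c) {y : α} (hy : y ∈ c.ends) :
    ∃ c' : ChainCoord α V, IsAdapted S c' ∧ c'.bot = y ∧ c'.ends = c.ends ∧
      ∀ u v, |c'.f u - c'.f v| = |c.f u - c.f v| := by
  obtain ⟨c', hc', htop, hends, habs⟩ := hc.exists_top_eq hy
  exact ⟨c'.reverse, hc'.reverse, htop, c'.ends_reverse.trans hends,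
    fun u v => (c'.abs_sub_reverse u v).trans (habs u v)⟩

/-- Stacks `d` on top of `c`; meaningful when `S c.top ∪ S d.bot` covers everything. -/
def glue (c d : ChainCoord α V) : ChainCoord α V :=
  ⟨c.f + d.f, c.height + d.height, d.top, c.bot⟩

section Glue

variable (hc : IsAdapted S c) (hd : IsAdapted S d) (hcover : S c.top ∪ S d.bot = Set.univ)
include hc hd hcover

lemma IsAdapted.eq_height_of_pos {v : V} (hv : 0 < d.f v) : c.f v = c.height := by
  have hv' : v ∈ S c.top ∪ S d.bot := hcover ▸ Set.mem_univ v
  rcases hv' with htop | hbot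
  · exact hc.eq_height v htop
  · exact absurd (hd.eq_zero v hbot) hv.ne'

lemma IsAdapted.glue : IsAdapted S (c.glue d) where
  height_pos := add_pos hc.height_pos hd.height_pos
  nonneg v := add_nonneg (hc.nonneg v) (hd.nonneg v)
  le_height v := add_le_add (hc.le_height v) (hd.le_height v)
  eq_height v hv := by
    have hdv := hd.eq_height v hv
    have hcv := hc.eq_height_of_pos hd hcover (hdv ▸ hd.height_pos)
    simp [ChainCoord.glue, hcv, hdv]
  eq_zero v hv := by
    have hcv := hc.eq_zero v hv
    have hdv : d.f v = 0 := by
      by_contra hne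
      have := hc.eq_height_of_pos hd hcover (lt_of_le_of_ne (hd.nonneg v) (Ne.symm hne))
      linarith [hc.height_pos]
    simp [ChainCoord.glue, hcv, hdv]

/-- Gluing is additive for `ℓ¹`-distances: both summands move in the same direction. -/
lemma abs_sub_glue (u v : V) :
    |(c.glue d).f u - (c.glue d).f v| = |c.f u - c.f v| + |d.f u - d.f v| := by
  simp only [ChainCoord.glue, Pi.add_apply, add_sub_add_comm]
  rw [abs_add_eq_add_abs_iff]
  rcases lt_trichotomy (d.f u) (d.f v) with h | h | h
  · have := hc.eq_height_of_pos hd hcover ((hd.nonneg u).trans_lt h)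
    right; constructor <;> linarith [hc.le_height u]
  · simp only [h, sub_self, le_refl, and_true]
    exact le_total _ _
  · have := hc.eq_height_of_pos hd hcover ((hd.nonneg v).trans_lt h)
    left; constructor <;> linarith [hc.le_height v]

end Glue

lemma IsAdapted.exists_glue_of_mem_ends (hc : IsAdapted S c) (hd : IsAdapted S d) {x y : α}
    (hx : x ∈ c.ends) (hy : y ∈ d.ends) (hcover : S x ∪ S y = Set.univ) :
    ∃ m : ChainCoord α V, IsAdapted S m ∧ c.ends ∪ d.ends ⊆ {x, y} ∪ m.ends ∧
      ∀ u v, |m.f u - m.f v| = |c.f u - c.f v| + |d.f u - d.f v| := by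
  obtain ⟨c', hc', rfl, hcends, hcabs⟩ := hc.exists_top_eq hx
  obtain ⟨d', hd', rfl, hdends, hdabs⟩ := hd.exists_bot_eq hy
  refine ⟨c'.glue d', hc'.glue hd' hcover, ?_, fun u v => ?_⟩
  · rw [← hcends, ← hdends]
    intro z
    simp only [ends, Set.mem_union, Set.mem_insert_iff, Set.mem_singleton_iff]
    tauto
  · rw [abs_sub_glue hc' hd' hcover, hcabs, hdabs]

def l1Dist (L : Multiset (ChainCoord α V)) (u v : V) : ℤ :=
  (L.map fun c => |c.f u - c.f v|).sum

lemma exists_l1Dist_eq_of_covering_pair {L : Multiset (ChainCoord α V)}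
    (hL : ∀ c ∈ L, IsAdapted S c) {x y : α} (hx : ∃ c ∈ L, x ∈ c.ends)
    (hy : ∃ d ∈ L, y ∈ d.ends) (hxy : x ≠ y)
    (hcover : S x ∪ S y = Set.univ) (hmeet : (S x ∩ S y).Nonempty) :
    ∃ L' : Multiset (ChainCoord α V), Multiset.card L' + 1 = Multiset.card L ∧
      (∀ c ∈ L', IsAdapted S c) ∧
      (∀ z ∉ ({x, y} : Set α), (∃ c ∈ L, z ∈ c.ends) → ∃ c ∈ L', z ∈ c.ends) ∧
      ∀ u v, l1Dist L' u v = l1Dist L u v := by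
  obtain ⟨c, hcL, hxc⟩ := hx
  obtain ⟨d, hdL, hyd⟩ := hy
  have hcd : c ≠ d := by
    rintro rfl
    exact Set.not_disjoint_iff_nonempty_inter.2 hmeet
      ((hL c hcL).disjoint_of_mem_ends hxc hyd hxy)
  obtain ⟨m, hm, hends, habs⟩ :=
    (hL c hcL).exists_glue_of_mem_ends (hL d hdL) hxc hyd hcover
  obtain ⟨L₁, rfl⟩ := Multiset.exists_cons_of_mem hcL
  obtain ⟨L₀, rfl⟩ :=
    Multiset.exists_cons_of_mem ((Multiset.mem_cons.1 hdL).resolve_left hcd.symm)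
  refine ⟨m ::ₘ L₀, by simp, ?_, ?_, fun u v => ?_⟩
  · intro c' hc'
    rcases Multiset.mem_cons.1 hc' with rfl | h
    · exact hm
    · exact hL c' (by simp [h])
  · rintro z hz ⟨c', hc', hzc'⟩
    rcases Multiset.mem_cons.1 hc' with rfl | hc'
    · exact ⟨m, Multiset.mem_cons_self _ _, (hends (Or.inl hzc')).resolve_left hz⟩
    rcases Multiset.mem_cons.1 hc' with rfl | hc'
    · exact ⟨m, Multiset.mem_cons_self _ _, (hends (Or.inr hzc')).resolve_left hz⟩
    · exact ⟨c', Multiset.mem_cons_of_mem hc', hzc'⟩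
  · simp only [l1Dist, Multiset.map_cons, Multiset.sum_cons, habs, add_assoc]

theorem exists_l1Dist_eq_of_isMatchingIn {H : SimpleGraph α} {M : Finset (Sym2 α)}
    (hM : IsMatchingIn H M)
    (hH : ∀ x y, H.Adj x y → S x ∪ S y = Set.univ ∧ (S x ∩ S y).Nonempty)
    {L : Multiset (ChainCoord α V)} (hL : ∀ c ∈ L, IsAdapted S c)
    (hends : ∀ e ∈ M, ∀ z ∈ e, ∃ c ∈ L, z ∈ c.ends) :
    ∃ L' : Multiset (ChainCoord α V), Multiset.card L' + M.card = Multiset.card L ∧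
      (∀ c ∈ L', IsAdapted S c) ∧ ∀ u v, l1Dist L' u v = l1Dist L u v := by
  classical
  induction M using Finset.induction_on generalizing L with
  | empty => exact ⟨L, by simp, hL, fun _ _ => rfl⟩
  | insert e M he ih =>
    induction e using Sym2.ind with
    | h x y =>
    have hxyM := Finset.mem_insert_self s(x, y) M
    have hadj : H.Adj x y := hM.1 _ hxyM
    obtain ⟨hcover, hmeet⟩ := hH x y hadj
    obtain ⟨L₁, hcard₁, hL₁, hends₁, hdist₁⟩ :=
      exists_l1Dist_eq_of_covering_pair hL (hends _ hxyM x (Sym2.mem_mk_left x y))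
        (hends _ hxyM y (Sym2.mem_mk_right x y)) hadj.ne hcover hmeet
    have hends' : ∀ e ∈ M, ∀ z ∈ e, ∃ c ∈ L₁, z ∈ c.ends := by
      intro e he' z hz
      have hzxy : z ∉ s(x, y) :=
        hM.2 e (Finset.mem_insert_of_mem he') _ hxyM (ne_of_mem_of_not_mem he' he) z hz
      exact hends₁ z (by simpa using hzxy) (hends e (Finset.mem_insert_of_mem he') z hz)
    obtain ⟨L₂, hcard₂, hL₂, hdist₂⟩ :=
      ih (hM.subset (Finset.subset_insert _ _)) hL₁ hends'
    refine ⟨L₂, ?_, hL₂, fun u v => (hdist₂ u v).trans (hdist₁ u v)⟩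
    rw [Finset.card_insert_of_notMem he]
    omega

end ChainCoord

section Hypercube

variable {V : Type*} {τ : ℕ}

def semicubeCoord (μ : V → Fin τ → Bool) (i : Fin τ) : ChainCoord (Fin τ × Bool) V :=
  ⟨fun v => if μ v i then 1 else 0, 1, (i, true), (i, false)⟩

lemma isAdapted_semicubeCoord (μ : V → Fin τ → Bool) (i : Fin τ) :
    (semicubeCoord μ i).IsAdapted fun z => semicube μ z.1 z.2 where
  height_pos := one_pos
  nonneg v := by dsimp only [semicubeCoord]; split <;> norm_num
  le_height v := by dsimp only [semicubeCoord]; split <;> norm_num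
  eq_height v hv := by simp_all [semicubeCoord, semicube]
  eq_zero v hv := by simp_all [semicubeCoord, semicube]

lemma mem_ends_semicubeCoord (μ : V → Fin τ → Bool) (z : Fin τ × Bool) :
    z ∈ (semicubeCoord μ z.1).ends := by
  rcases z with ⟨i, _ | _⟩ <;> simp [ChainCoord.ends, semicubeCoord]

lemma l1Dist_semicubeCoord (μ : V → Fin τ → Bool) (u v : V) :
    ChainCoord.l1Dist (Finset.univ.val.map (semicubeCoord μ)) u v = hammingDist (μ u) (μ v) := by
  rw [ChainCoord.l1Dist, Multiset.map_map, ← Finset.sum_eq_multiset_sum, hammingDist,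
    ← Finset.sum_boole]
  refine Finset.sum_congr rfl fun i _ => ?_
  simp only [Function.comp_apply, semicubeCoord]
  cases μ u i <;> cases μ v i <;> simp

end Hypercube

theorem lattice_embedding_from_matching_general
    {V : Type*}
    (G : SimpleGraph V)
    (τ : ℕ) (μ : V → Fin τ → Bool)
    (hiso : ∀ u v : V, hammingDist (μ u) (μ v) = G.dist u v)
    (M : Finset (Sym2 (Fin τ × Bool)))
    (hM : IsMatchingIn (semicubeGraph μ) M) :
    ∃ lam : V → Fin (τ - M.card) → ℤ,
      ∀ u v : V, ∑ i, |lam u i - lam v i| = (G.dist u v : ℤ) := by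
  obtain ⟨L, hcard, -, hdist⟩ :=
    ChainCoord.exists_l1Dist_eq_of_isMatchingIn (S := fun z => semicube μ z.1 z.2) hM
      (fun _ _ hadj => hadj.2) (L := Finset.univ.val.map (semicubeCoord μ))
      (by simpa using isAdapted_semicubeCoord μ)
      (fun _ _ z _ => ⟨_, by simp, mem_ends_semicubeCoord μ z⟩)
  obtain ⟨e, rfl⟩ := L.exists_fin_map_eq (n := τ - M.card) (by simp at hcard; omega)
  refine ⟨fun v j => (e j).f v, fun u v => ?_⟩
  rw [← hiso, ← l1Dist_semicubeCoord, ← hdist, ChainCoord.l1Dist, Multiset.map_map,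
    ← Finset.sum_eq_multiset_sum]
  rfl

/-- **Lemma 6.** If `G` is a finite connected graph with a full-dimensional
hypercube isometry `μ : V → {0,1}^τ`, and `M` is any matching in the semicube
graph `Sc(G)`, then `G` has an isometric embedding `λ : V → ℤ^d` into the
integer lattice with `d = τ − |M|`. -/
theorem lattice_embedding_from_matching
    {V : Type*} [Fintype V] [DecidableEq V]
    (G : SimpleGraph V) (hconn : G.Connected)
    (τ : ℕ) (μ : V → Fin τ → Bool)
    (hiso : ∀ u v : V, hammingDist (μ u) (μ v) = G.dist u v)
    (hfull : ∀ i : Fin τ, (∃ v, μ v i = false) ∧ (∃ v, μ v i = true))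
    (M : Finset (Sym2 (Fin τ × Bool)))
    (hM : IsMatchingIn (semicubeGraph μ) M) :
    ∃ lam : V → Fin (τ - M.card) → ℤ,
      ∀ u v : V, ∑ i, |lam u i - lam v i| = (G.dist u v : ℤ) :=
  lattice_embedding_from_matching_general G τ μ hiso M hM
end

section
/- A finite connected simple graph G has an isometric embedding into the integer lattice ℤ^d (with the L1 metric) for some finite d if and only if G has an isometric embedding into a hypercube {0,1}^τ (with the Hamming metric) for some finite τ; that is, the graphs of finite lattice dimension are exactly the partial cubes. -/
open Finset

lemma ham_comp_equiv {α β : Type*} [Fintype α] [Fintype β] (e : α ≃ β)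
    (x y : β → Bool) : hammingDist (x ∘ e) (y ∘ e) = hammingDist x y := by
  simp only [hammingDist]
  exact Finset.card_equiv e (by simp)

lemma count_unary (M a b : ℕ) :
    ((Finset.range M).filter fun j => decide (j < a) ≠ decide (j < b)).card
      = min (max a b) M - min (min a b) M := by
  have h : ((Finset.range M).filter fun j => decide (j < a) ≠ decide (j < b))
      = Finset.Ico (min (min a b) M) (min (max a b) M) := by
    ext j
    simp only [mem_filter, mem_range, mem_Ico, ne_eq, decide_eq_decide]
    omega
  rw [h, Nat.card_Ico]

/-- A finite connected graph `G` has an isometric embedding into the integer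
lattice `ℤ^d` (with the L1 metric) for some finite `d` if and only if it has an
isometric embedding into a hypercube `{0,1}^τ` (with the Hamming metric) for
some finite `τ`; i.e., the graphs of finite lattice dimension are exactly the
partial cubes. -/
theorem lattice_embeddable_iff_partial_cube
    {V : Type*} [Fintype V] [DecidableEq V]
    (G : SimpleGraph V) (hconn : G.Connected) :
    (∃ (d : ℕ) (lam : V → Fin d → ℤ),
        ∀ u v : V, ∑ i, |lam u i - lam v i| = (G.dist u v : ℤ)) ↔
    (∃ (τ : ℕ) (μ : V → Fin τ → Bool),
        ∀ u v : V, hammingDist (μ u) (μ v) = G.dist u v) := by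
  constructor
  · rintro ⟨d, lam, hlam⟩
    set N : ℕ := Finset.univ.sup (fun p : V × Fin d => (lam p.1 p.2).natAbs) with hNdef
    have hN : ∀ u i, (lam u i).natAbs ≤ N := fun u i =>
      Finset.le_sup (f := fun p : V × Fin d => (lam p.1 p.2).natAbs) (Finset.mem_univ (u, i))
    set c : V → Fin d → ℕ := fun u i => (lam u i + N).toNat with hcdef
    have hc : ∀ u i, (c u i : ℤ) = lam u i + N := by
      intro u i; have h := hN u i; simp only [hcdef]; omega
    have hcM : ∀ u i, c u i ≤ 2 * N := by
      intro u i; have h := hN u i; simp only [hcdef]; omega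
    refine ⟨d * (2 * N),
      fun u => (fun p : Fin d × Fin (2 * N) => decide (p.2.val < c u p.1)) ∘
        finProdFinEquiv.symm, ?_⟩
    intro u v
    have h1 : hammingDist
        ((fun p : Fin d × Fin (2 * N) => decide (p.2.val < c u p.1)) ∘ finProdFinEquiv.symm)
        ((fun p : Fin d × Fin (2 * N) => decide (p.2.val < c v p.1)) ∘ finProdFinEquiv.symm)
        = hammingDist (fun p : Fin d × Fin (2 * N) => decide (p.2.val < c u p.1))
          (fun p : Fin d × Fin (2 * N) => decide (p.2.val < c v p.1)) :=
      ham_comp_equiv _ _ _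
    have h2 : hammingDist (fun p : Fin d × Fin (2 * N) => decide (p.2.val < c u p.1))
          (fun p : Fin d × Fin (2 * N) => decide (p.2.val < c v p.1))
        = ∑ i : Fin d, (max (c u i) (c v i) - min (c u i) (c v i)) := by
      simp only [hammingDist]
      rw [Finset.card_filter, Fintype.sum_prod_type]
      refine Finset.sum_congr rfl fun i _ => ?_
      rw [Fin.sum_univ_eq_sum_range
        (fun j => if decide (j < c u i) ≠ decide (j < c v i) then 1 else 0),
        ← Finset.card_filter, count_unary]
      have h1 := hcM u i; have h2 := hcM v i
      omega
    have h3 : (hammingDist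
        ((fun p : Fin d × Fin (2 * N) => decide (p.2.val < c u p.1)) ∘ finProdFinEquiv.symm)
        ((fun p : Fin d × Fin (2 * N) => decide (p.2.val < c v p.1)) ∘ finProdFinEquiv.symm) : ℤ)
        = (G.dist u v : ℤ) := by
      rw [h1, h2, ← hlam u v]
      push_cast
      refine Finset.sum_congr rfl fun i _ => ?_
      have hu := hc u i; have hv := hc v i
      rw [Int.abs_eq_natAbs]
      omega
    exact_mod_cast h3
  · rintro ⟨τ, μ, hμ⟩
    refine ⟨τ, fun u i => if μ u i then 1 else 0, ?_⟩
    intro u v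
    have h : ∀ i : Fin τ, |(if μ u i then (1:ℤ) else 0) - (if μ v i then 1 else 0)|
        = if μ u i ≠ μ v i then 1 else 0 := by
      intro i; cases μ u i <;> cases μ v i <;> simp
    rw [Finset.sum_congr rfl fun i _ => h i, Finset.sum_boole, ← hμ u v]
    simp [hammingDist]
end

section
/- Let G be a finite connected simple graph with a full-dimensional hypercube isometry μ : V → {0,1}^τ. Then the semicubes of μ are exactly the Djokovic sets of edges of G: (1) for every edge uv of G there is a unique coordinate i in which μ(u) and μ(v) differ, and S_{i,μ_i(u)} = W_{u,v} := {w ∈ V : d_G(w,u) < d_G(w,v)}; and (2) every semicube S_{i,χ} is equal to W_{u,v} for some edge uv of G. -/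
lemma ham_flip {n : ℕ} (f g w : Fin n → Bool) (i : Fin n)
    (hne : f i ≠ g i) (heq : ∀ j, j ≠ i → f j = g j) :
    (w i = f i → hammingDist w g = hammingDist w f + 1) ∧
    (w i ≠ f i → hammingDist w f = hammingDist w g + 1) := by
  have key : ∀ (h : Fin n → Bool),
      hammingDist w h = (if w i ≠ h i then 1 else 0)
        + ∑ j ∈ Finset.univ.erase i, (if w j ≠ h j then 1 else 0) := by
    intro h
    rw [hammingDist, Finset.card_filter, ← Finset.add_sum_erase _ _ (Finset.mem_univ i)]
  have hsum : ∑ j ∈ Finset.univ.erase i, (if w j ≠ f j then 1 else 0)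
      = ∑ j ∈ Finset.univ.erase i, (if w j ≠ g j then 1 else 0) := by
    apply Finset.sum_congr rfl
    intro j hj
    rw [heq j (Finset.ne_of_mem_erase hj)]
  constructor
  · intro hw
    rw [key f, key g, hsum, hw, if_pos hne, if_neg (by simp)]
    omega
  · intro hw
    have hw' : w i = g i := by
      cases hb : w i <;> cases hc : g i <;> cases hd : f i <;>
        simp_all
    rw [key f, key g, hsum, hw', if_pos hne.symm, if_neg (by simp)]
    omega

lemma walk_flip {V : Type*} {G : SimpleGraph V} (P : V → Prop) :
    ∀ {a b : V} (_ : G.Walk a b), P a → ¬ P b →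
      ∃ u v, G.Adj u v ∧ P u ∧ ¬ P v := by
  intro a b p
  induction p with
  | nil => exact fun h h' => absurd h h'
  | @cons a c b h p ih =>
    intro ha hb
    by_cases hc : P c
    · exact ih hc hb
    · exact ⟨a, c, h, ha, hc⟩

/-- For a full-dimensional hypercube isometry `μ : V → {0,1}^τ` of a finite
connected graph `G`, the semicubes `S_{i,χ} = {w | μ_i(w) = χ}` are exactly the
Djokovic sets `W_{u,v} = {w | d_G(w,u) < d_G(w,v)}` of edges of `G`:
(1) for every edge `uv` there is a unique coordinate `i` where `μ(u)` and `μ(v)`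
differ, and for any such coordinate `S_{i,μ_i(u)} = W_{u,v}`; and
(2) every semicube equals `W_{u,v}` for some edge `uv`. -/
theorem semicubes_are_djokovic_sets
    {V : Type*} [Fintype V] [DecidableEq V]
    (G : SimpleGraph V) (hconn : G.Connected)
    (τ : ℕ) (μ : V → Fin τ → Bool)
    (hiso : ∀ u v : V, hammingDist (μ u) (μ v) = G.dist u v)
    (hfull : ∀ i : Fin τ, (∃ v, μ v i = false) ∧ (∃ v, μ v i = true)) :
    (∀ u v : V, G.Adj u v →
      (∃! i : Fin τ, μ u i ≠ μ v i) ∧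
      ∀ i : Fin τ, μ u i ≠ μ v i →
        {w : V | μ w i = μ u i} = {w : V | G.dist w u < G.dist w v}) ∧
    (∀ (i : Fin τ) (χ : Bool), ∃ u v : V, G.Adj u v ∧
      {w : V | μ w i = χ} = {w : V | G.dist w u < G.dist w v}) := by
  -- main edge analysis
  have main : ∀ u v : V, G.Adj u v →
      (∃! i : Fin τ, μ u i ≠ μ v i) ∧
      ∀ i : Fin τ, μ u i ≠ μ v i →
        {w : V | μ w i = μ u i} = {w : V | G.dist w u < G.dist w v} := by
    intro u v huv
    have hd1 : G.dist u v = 1 := (SimpleGraph.dist_eq_one_iff_adj).2 huv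
    have hh1 : hammingDist (μ u) (μ v) = 1 := by rw [hiso, hd1]
    rw [hammingDist, Finset.card_eq_one] at hh1
    obtain ⟨i0, hi0⟩ := hh1
    have hmem : ∀ j : Fin τ, μ u j ≠ μ v j ↔ j = i0 := by
      intro j
      constructor
      · intro hj
        have : j ∈ ({i0} : Finset (Fin τ)) := hi0 ▸ (by simpa using hj)
        simpa using this
      · intro hj
        rw [hj]
        have : i0 ∈ ({i0} : Finset (Fin τ)) := Finset.mem_singleton_self i0
        rw [← hi0] at this
        simpa using this
    have hex : ∃! i : Fin τ, μ u i ≠ μ v i :=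
      ⟨i0, (hmem i0).2 rfl, fun j hj => (hmem j).1 hj⟩
    refine ⟨hex, ?_⟩
    intro i hi
    have hi' : i = i0 := (hmem i).1 hi
    subst hi'
    have heq : ∀ j, j ≠ i → μ u j = μ v j := by
      intro j hj
      by_contra hc
      exact hj ((hmem j).1 hc)
    ext w
    simp only [Set.mem_setOf_eq]
    obtain ⟨h1, h2⟩ := ham_flip (μ u) (μ v) (μ w) i hi heq
    constructor
    · intro hw
      have := h1 hw
      rw [hiso, hiso] at this
      omega
    · intro hw
      by_contra hc
      have := h2 hc
      rw [hiso, hiso] at this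
      omega
  refine ⟨main, ?_⟩
  intro i χ
  obtain ⟨⟨a0, ha0⟩, ⟨a1, ha1⟩⟩ := hfull i
  have hab : ∃ a b : V, μ a i = χ ∧ μ b i ≠ χ := by
    cases χ
    · exact ⟨a0, a1, ha0, by simp [ha1]⟩
    · exact ⟨a1, a0, ha1, by simp [ha0]⟩
  obtain ⟨a, b, ha, hb⟩ := hab
  obtain ⟨p⟩ := hconn a b
  obtain ⟨u, v, huv, hu, hv⟩ := walk_flip (fun x => μ x i = χ) p ha hb
  refine ⟨u, v, huv, ?_⟩
  have hne : μ u i ≠ μ v i := by rw [hu]; exact fun h => hv h.symm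
  have := (main u v huv).2 i hne
  rw [← this, hu]
end

section
/- Let G be a finite connected simple graph and let μ : V → {0,1}^τ and μ' : V → {0,1}^{τ'} be two full-dimensional hypercube isometries of G. Then τ = τ' and the two families of semicubes coincide as families of subsets of V: {S_{i,χ}(μ) : 0 ≤ i < τ, χ ∈ {0,1}} = {S_{i,χ}(μ') : 0 ≤ i < τ', χ ∈ {0,1}}. In particular, the isometric dimension of a partial cube and its semicube graph (up to graph isomorphism) do not depend on the choice of full-dimensional hypercube isometry. -/
open Finset

private lemma flip_of_hamming_one {n : ℕ} (f g : Fin n → Bool)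
    (h : hammingDist f g = 1) :
    ∃ i, f i ≠ g i ∧ ∀ j, j ≠ i → f j = g j := by
  rw [hammingDist, Finset.card_eq_one] at h
  obtain ⟨i, hi⟩ := h
  refine ⟨i, ?_, ?_⟩
  · have : i ∈ ({i} : Finset (Fin n)) := Finset.mem_singleton_self i
    rw [← hi] at this
    simpa using this
  · intro j hj
    by_contra hne
    have : j ∈ ({i} : Finset (Fin n)) := by
      rw [← hi]; simp [hne]
    simp at this
    exact hj this

/-- Half-space formula: if the pair `(a,b)` flips exactly coordinate `i`, then
`μ w i = μ a i ↔ dist w a < dist w b`. -/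
private lemma halfspace {V : Type*} [Fintype V] (G : SimpleGraph V)
    {n : ℕ} (μ : V → Fin n → Bool)
    (hiso : ∀ u v : V, hammingDist (μ u) (μ v) = G.dist u v)
    {a b : V} {i : Fin n} (hab : μ a i ≠ μ b i)
    (hrest : ∀ j, j ≠ i → μ a j = μ b j) (w : V) :
    μ w i = μ a i ↔ G.dist w a < G.dist w b := by
  classical
  set A : Finset (Fin n) := {j | μ w j ≠ μ a j} with hA
  set B : Finset (Fin n) := {j | μ w j ≠ μ b j} with hB
  have hdA : hammingDist (μ w) (μ a) = A.card := rfl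
  have hdB : hammingDist (μ w) (μ b) = B.card := rfl
  by_cases hwi : μ w i = μ a i
  · -- B = insert i A
    have hBA : B = insert i A := by
      ext j
      by_cases hj : j = i
      · subst hj
        have hwb : μ w j ≠ μ b j := fun h => hab (hwi ▸ h)
        simp [hA, hB, hwb]
      · simp [hA, hB, hj, hrest j hj]
    have hiA : i ∉ A := by simp [hA, hwi]
    have hcard : B.card = A.card + 1 := by
      rw [hBA, Finset.card_insert_of_notMem hiA]
    simp only [hwi, true_iff]
    have h1 : G.dist w a = A.card := by rw [← hiso, hdA]
    have h2 : G.dist w b = B.card := by rw [← hiso, hdB]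
    omega
  · have hwb : μ w i = μ b i := by
      cases h1 : μ a i <;> cases h2 : μ b i <;> cases h3 : μ w i <;>
        simp_all
    have hAB : A = insert i B := by
      ext j
      by_cases hj : j = i
      · subst hj
        simp [hA, hB, hwi]
      · simp [hA, hB, hj, hrest j hj]
    have hiB : i ∉ B := by simp [hB, hwb]
    have hcard : A.card = B.card + 1 := by
      rw [hAB, Finset.card_insert_of_notMem hiB]
    simp only [hwi, false_iff]
    have h1 : G.dist w a = A.card := by rw [← hiso, hdA]
    have h2 : G.dist w b = B.card := by rw [← hiso, hdB]
    omega

/-- Along a walk whose endpoints differ in coordinate `i`, some edge differs in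
coordinate `i`. -/
private lemma edge_flip_along_walk {V : Type*} (G : SimpleGraph V)
    {n : ℕ} (μ : V → Fin n → Bool) (i : Fin n) :
    ∀ {u v : V} (_ : G.Walk u v), μ u i ≠ μ v i →
      ∃ a b, G.Adj a b ∧ μ a i ≠ μ b i := by
  intro u v p
  induction p with
  | nil => intro h; exact absurd rfl h
  | @cons x y z h p ih =>
    intro hne
    by_cases hc : μ x i = μ y i
    · exact ih (fun h' => hne (hc.trans h'))
    · exact ⟨x, y, h, hc⟩

/-- For every coordinate there is an edge flipping exactly that coordinate. -/
private lemma exists_flipping_edge {V : Type*} [Fintype V] (G : SimpleGraph V)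
    (hconn : G.Connected)
    {n : ℕ} (μ : V → Fin n → Bool)
    (hiso : ∀ u v : V, hammingDist (μ u) (μ v) = G.dist u v)
    (hfull : ∀ i : Fin n, (∃ v, μ v i = false) ∧ (∃ v, μ v i = true))
    (i : Fin n) :
    ∃ a b, G.Adj a b ∧ μ a i ≠ μ b i ∧ ∀ j, j ≠ i → μ a j = μ b j := by
  obtain ⟨⟨u, hu⟩, ⟨v, hv⟩⟩ := hfull i
  have hne : μ u i ≠ μ v i := by rw [hu, hv]; simp
  obtain ⟨a, b, hab, habi⟩ :=
    edge_flip_along_walk G μ i (hconn.preconnected u v).some hne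
  have hd1 : G.dist a b = 1 := SimpleGraph.dist_eq_one_iff_adj.mpr hab
  have hh1 : hammingDist (μ a) (μ b) = 1 := by rw [hiso, hd1]
  obtain ⟨j, hj1, hj2⟩ := flip_of_hamming_one _ _ hh1
  have hij : i = j := by
    by_contra h
    exact habi (hj2 i h)
  subst hij
  exact ⟨a, b, hab, habi, hj2⟩

private lemma family_eq_dist_family {V : Type*} [Fintype V] (G : SimpleGraph V)
    (hconn : G.Connected)
    {n : ℕ} (μ : V → Fin n → Bool)
    (hiso : ∀ u v : V, hammingDist (μ u) (μ v) = G.dist u v)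
    (hfull : ∀ i : Fin n, (∃ v, μ v i = false) ∧ (∃ v, μ v i = true)) :
    {S : Set V | ∃ (i : Fin n) (χ : Bool), S = {v : V | μ v i = χ}} =
      {S : Set V | ∃ a b, G.Adj a b ∧ S = {w : V | G.dist w a < G.dist w b}} := by
  ext S
  constructor
  · rintro ⟨i, χ, rfl⟩
    obtain ⟨a, b, hab, habi, hrest⟩ := exists_flipping_edge G hconn μ hiso hfull i
    by_cases hχ : μ a i = χ
    · refine ⟨a, b, hab, ?_⟩
      ext w
      simp only [Set.mem_setOf_eq]
      rw [← hχ]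
      exact halfspace G μ hiso habi hrest w
    · have hbχ : μ b i = χ := by
        cases h1 : μ a i <;> cases h2 : μ b i <;> cases χ <;> simp_all
      refine ⟨b, a, hab.symm, ?_⟩
      ext w
      simp only [Set.mem_setOf_eq]
      rw [← hbχ]
      exact halfspace G μ hiso (Ne.symm habi) (fun j hj => (hrest j hj).symm) w
  · rintro ⟨a, b, hab, rfl⟩
    have hd1 : G.dist a b = 1 := SimpleGraph.dist_eq_one_iff_adj.mpr hab
    have hh1 : hammingDist (μ a) (μ b) = 1 := by rw [hiso, hd1]
    obtain ⟨i, hi1, hi2⟩ := flip_of_hamming_one _ _ hh1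
    refine ⟨i, μ a i, ?_⟩
    ext w
    simp only [Set.mem_setOf_eq]
    exact (halfspace G μ hiso hi1 hi2 w).symm

private lemma card_le {V : Type*} [Fintype V] (G : SimpleGraph V)
    (hconn : G.Connected)
    (τ τ' : ℕ) (μ : V → Fin τ → Bool) (μ' : V → Fin τ' → Bool)
    (hiso : ∀ u v : V, hammingDist (μ u) (μ v) = G.dist u v)
    (hfull : ∀ i : Fin τ, (∃ v, μ v i = false) ∧ (∃ v, μ v i = true))
    (hiso' : ∀ u v : V, hammingDist (μ' u) (μ' v) = G.dist u v) :
    τ ≤ τ' := by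
  classical
  -- for every i there is i' together with an edge flipping exactly i (for μ)
  -- and exactly i' (for μ')
  have key : ∀ i : Fin τ, ∃ i' : Fin τ', ∃ a b : V, G.Adj a b ∧
      (μ a i ≠ μ b i ∧ ∀ j, j ≠ i → μ a j = μ b j) ∧
      (μ' a i' ≠ μ' b i' ∧ ∀ j, j ≠ i' → μ' a j = μ' b j) := by
    intro i
    obtain ⟨a, b, hab, habi, hrest⟩ := exists_flipping_edge G hconn μ hiso hfull i
    have hd1 : G.dist a b = 1 := SimpleGraph.dist_eq_one_iff_adj.mpr hab
    have hh1 : hammingDist (μ' a) (μ' b) = 1 := by rw [hiso', hd1]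
    obtain ⟨i', hi1, hi2⟩ := flip_of_hamming_one _ _ hh1
    exact ⟨i', a, b, hab, ⟨habi, hrest⟩, ⟨hi1, hi2⟩⟩
  choose f a b hadj hflip hflip' using key
  have hinj : Function.Injective f := by
    intro i₁ i₂ hf
    -- edge (a i₁, b i₁) flips exactly i₁ under μ and exactly (f i₁) under μ'
    -- edge (a i₂, b i₂) flips exactly i₂ under μ and exactly (f i₂ = f i₁) under μ'
    by_contra hne
    -- halfspace for μ with edge 2 and for μ' with edge 2: coordinate i₂ ↔ f i₂
    have E : ∀ w, (μ w i₂ = μ (a i₂) i₂ ↔ μ' w (f i₁) = μ' (a i₂) (f i₁)) := by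
      intro w
      rw [halfspace G μ hiso (hflip i₂).1 (hflip i₂).2 w]
      rw [hf]
      exact (halfspace G μ' hiso' (hflip' i₂).1 (hflip' i₂).2 w).symm
    -- edge 1 flips f i₁ under μ'
    have h1 : μ' (a i₁) (f i₁) ≠ μ' (b i₁) (f i₁) := (hflip' i₁).1
    have Ea := E (a i₁)
    have Eb := E (b i₁)
    -- edge 1 does not flip i₂ under μ (since i₂ ≠ i₁)
    have h2 : μ (a i₁) i₂ = μ (b i₁) i₂ := (hflip i₁).2 i₂ (fun h => hne h.symm)
    revert Ea Eb h1 h2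
    cases μ (a i₁) i₂ <;> cases μ (b i₁) i₂ <;> cases μ (a i₂) i₂ <;>
      cases μ' (a i₁) (f i₁) <;> cases μ' (b i₁) (f i₁) <;>
      cases μ' (a i₂) (f i₁) <;> simp
  simpa using Fintype.card_le_of_injective f hinj

/-- If `μ : V → {0,1}^τ` and `μ' : V → {0,1}^τ'` are two full-dimensional
hypercube isometries of the same finite connected graph `G`, then `τ = τ'` and
the two families of semicubes coincide as families of subsets of `V`. In
particular, the isometric dimension of a partial cube and its semicube graph do
not depend on the choice of full-dimensional hypercube isometry. -/
theorem semicube_family_independent_of_isometry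
    {V : Type*} [Fintype V] [DecidableEq V]
    (G : SimpleGraph V) (hconn : G.Connected)
    (τ τ' : ℕ) (μ : V → Fin τ → Bool) (μ' : V → Fin τ' → Bool)
    (hiso : ∀ u v : V, hammingDist (μ u) (μ v) = G.dist u v)
    (hfull : ∀ i : Fin τ, (∃ v, μ v i = false) ∧ (∃ v, μ v i = true))
    (hiso' : ∀ u v : V, hammingDist (μ' u) (μ' v) = G.dist u v)
    (hfull' : ∀ i : Fin τ', (∃ v, μ' v i = false) ∧ (∃ v, μ' v i = true)) :
    τ = τ' ∧
    {S : Set V | ∃ (i : Fin τ) (χ : Bool), S = {v : V | μ v i = χ}} =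
      {S : Set V | ∃ (i : Fin τ') (χ : Bool), S = {v : V | μ' v i = χ}} := by
  constructor
  · exact le_antisymm (card_le G hconn τ τ' μ μ' hiso hfull hiso')
      (card_le G hconn τ' τ μ' μ hiso' hfull' hiso)
  · rw [family_eq_dist_family G hconn μ hiso hfull,
      family_eq_dist_family G hconn μ' hiso' hfull']
end
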